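/- arXiv:math/0011227 — 6 statements merged into one kernel-verified Lean document; each statement's English description precedes it below -/
import Mathlib

section
/- Let d ≥ 5 be an integer and let k = ⌊d/2⌋. Let G be the presented group on two generators a, b with relators a^d b^d together with a^{d−i} b^i and b^{d−i} a^i for every i ∈ {0} ∪ {2, 3, …, k}. Then G is isomorphic to the cyclic group ℤ/dℤ, via an isomorphism sending the image of a to the generator 1 of ℤ/dℤ. -/
/-- The generator `a` of the free group on two generators. -/
def genA : FreeGroup (Fin 2) := FreeGroup.of 0

/-- The generator `b` of the free group on two generators. -/
def genB : FreeGroup (Fin 2) := FreeGroup.of 1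

/-- The relators `a^d b^d`, together with `a^(d-i) b^i` and `b^(d-i) a^i`
for every `i ∈ {0} ∪ {2, 3, …, ⌊d/2⌋}`. -/
def nestRels (d : ℕ) : Set (FreeGroup (Fin 2)) :=
  {genA ^ d * genB ^ d} ∪
    ⋃ i ∈ ({0} ∪ Set.Icc 2 (d / 2) : Set ℕ),
      {genA ^ (d - i) * genB ^ i, genB ^ (d - i) * genA ^ i}

/-- For `d ≥ 5`, the presented group `⟨a, b | a^d b^d, a^(d-i) b^i, b^(d-i) a^i
(i ∈ {0} ∪ {2,…,⌊d/2⌋})⟩` is isomorphic to `ℤ/dℤ`, via an isomorphism sending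
the image of `a` to the generator `1` of `ℤ/dℤ`. -/
theorem nest_presented_group_iso_zmod (d : ℕ) (hd : 5 ≤ d) :
    ∃ e : PresentedGroup (nestRels d) ≃* Multiplicative (ZMod d),
      e (PresentedGroup.of 0) = Multiplicative.ofAdd (1 : ZMod d) := by
  haveI : NeZero d := ⟨by omega⟩
  set G := PresentedGroup (nestRels d)
  set A : G := PresentedGroup.of 0 with hAdef
  set B : G := PresentedGroup.of 1 with hBdef
  have hrel : ∀ r ∈ nestRels d, PresentedGroup.mk (nestRels d) r = 1 := by
    intro r hr
    exact (QuotientGroup.eq_one_iff r).2 (Subgroup.subset_normalClosure hr)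
  have hmkA : ∀ n m : ℕ, PresentedGroup.mk (nestRels d) (genA ^ n * genB ^ m) = A ^ n * B ^ m := by
    intro n m; simp [genA, genB, map_mul, map_pow]; rfl
  have hmkB : ∀ n m : ℕ, PresentedGroup.mk (nestRels d) (genB ^ n * genA ^ m) = B ^ n * A ^ m := by
    intro n m; simp [genA, genB, map_mul, map_pow]; rfl
  have hiS : ∀ i : ℕ, i = 0 ∨ (2 ≤ i ∧ i ≤ d / 2) → i ∈ ({0} ∪ Set.Icc 2 (d / 2) : Set ℕ) := by
    intro i hi
    rcases hi with h | h
    · exact Or.inl h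
    · exact Or.inr ⟨h.1, h.2⟩
  have memA : ∀ i : ℕ, i = 0 ∨ (2 ≤ i ∧ i ≤ d / 2) → genA ^ (d - i) * genB ^ i ∈ nestRels d := by
    intro i hi
    exact Or.inr (Set.mem_biUnion (hiS i hi) (Set.mem_insert _ _))
  have memB : ∀ i : ℕ, i = 0 ∨ (2 ≤ i ∧ i ≤ d / 2) → genB ^ (d - i) * genA ^ i ∈ nestRels d := by
    intro i hi
    exact Or.inr (Set.mem_biUnion (hiS i hi) (Set.mem_insert_iff.2 (Or.inr rfl)))
  have relA : ∀ i : ℕ, i = 0 ∨ (2 ≤ i ∧ i ≤ d / 2) → A ^ (d - i) * B ^ i = 1 := by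
    intro i hi; rw [← hmkA]; exact hrel _ (memA i hi)
  have relB : ∀ i : ℕ, i = 0 ∨ (2 ≤ i ∧ i ≤ d / 2) → B ^ (d - i) * A ^ i = 1 := by
    intro i hi; rw [← hmkB]; exact hrel _ (memB i hi)
  have hAd : A ^ d = 1 := by have := relA 0 (Or.inl rfl); simpa using this
  have hpow : ∀ i : ℕ, i ≤ d → A ^ (d - i) * A ^ i = 1 := by
    intro i hi; rw [← pow_add, Nat.sub_add_cancel hi]; exact hAd
  have hB2 : B ^ 2 = A ^ 2 := by
    have h1 := eq_inv_of_mul_eq_one_right (relA 2 (Or.inr ⟨le_refl 2, by omega⟩))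
    have h2 := eq_inv_of_mul_eq_one_right (hpow 2 (by omega))
    rw [h1, h2]
  have hB3 : B ^ 3 = A ^ 3 := by
    by_cases h6 : 6 ≤ d
    · have h1 := eq_inv_of_mul_eq_one_right (relA 3 (Or.inr ⟨by omega, by omega⟩))
      have h2 := eq_inv_of_mul_eq_one_right (hpow 3 (by omega))
      rw [h1, h2]
    · have hd5 : d = 5 := by omega
      have h1 := relB 2 (Or.inr ⟨le_refl 2, by omega⟩)
      have h2 := hpow 2 (by omega)
      have h3 : d - 2 = 3 := by omega
      rw [h3] at h1 h2
      have e1 : B ^ 3 = (A ^ 2)⁻¹ := eq_inv_of_mul_eq_one_left h1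
      have e2 : A ^ 3 = (A ^ 2)⁻¹ := eq_inv_of_mul_eq_one_left h2
      rw [e1, e2]
  have hBA : B = A := by
    have : (B ^ 2)⁻¹ * B ^ 3 = B := by group
    rw [← this, hB2, hB3]; group
  -- the homomorphism to ZMod d
  have hlift : ∀ r ∈ nestRels d,
      (FreeGroup.lift fun _ : Fin 2 => Multiplicative.ofAdd (1 : ZMod d)) r = 1 := by
    have key : ∀ x y : Fin 2, ∀ n m : ℕ, (n + m : ZMod d) = 0 →
        (FreeGroup.lift fun _ : Fin 2 => Multiplicative.ofAdd (1 : ZMod d))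
          (FreeGroup.of x ^ n * FreeGroup.of y ^ m) = 1 := by
      intro x y n m h
      rw [map_mul, map_pow, map_pow, FreeGroup.lift_apply_of, FreeGroup.lift_apply_of,
        ← ofAdd_nsmul, ← ofAdd_nsmul, ← ofAdd_add]
      have : (n • (1 : ZMod d) + m • (1 : ZMod d)) = 0 := by
        simpa [nsmul_eq_mul] using h
      rw [this, ofAdd_zero]
    intro r hr
    have subcancel : ∀ i : ℕ, i ≤ d → ((d - i : ℕ) + (i : ℕ) : ZMod d) = 0 := by
      intro i hi
      have : ((d - i : ℕ) : ZMod d) + (i : ZMod d) = ((d - i + i : ℕ) : ZMod d) := by push_cast; ring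
      rw [this, Nat.sub_add_cancel hi, ZMod.natCast_self]
    rcases hr with h | h
    · rw [Set.mem_singleton_iff] at h
      subst h
      exact key 0 1 d d (by simp)
    · simp only [Set.mem_iUnion, Set.mem_union, Set.mem_singleton_iff, Set.mem_Icc,
        Set.mem_insert_iff, exists_prop] at h
      obtain ⟨i, hi, hri⟩ := h
      have hile : i ≤ d := by rcases hi with h | h; omega; omega
      rcases hri with h | h <;> subst h
      · exact key 0 1 (d - i) i (subcancel i hile)
      · exact key 1 0 (d - i) i (subcancel i hile)
  let φ : G →* Multiplicative (ZMod d) := PresentedGroup.toGroup hlift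
  have hφA : φ A = Multiplicative.ofAdd (1 : ZMod d) := PresentedGroup.toGroup.of hlift
  have hφpow : ∀ k : ℤ, φ (A ^ k) = Multiplicative.ofAdd ((k : ZMod d)) := by
    intro k
    rw [map_zpow, hφA, ← ofAdd_zsmul]
    congr 1
    simp [zsmul_eq_mul]
  have hgen : ∀ g : G, g ∈ Subgroup.zpowers A := by
    intro g
    apply PresentedGroup.generated_by
    intro j
    fin_cases j
    · exact Subgroup.mem_zpowers A
    · exact hBA ▸ Subgroup.mem_zpowers A
  have hinj : Function.Injective φ := by
    refine (injective_iff_map_eq_one φ).2 ?_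
    intro g hg
    obtain ⟨k, hk⟩ := hgen g
    rw [← hk, hφpow] at hg
    have h0 : (k : ZMod d) = 0 := by
      have := congrArg Multiplicative.toAdd hg
      simpa using this
    obtain ⟨t, ht⟩ := (ZMod.intCast_zmod_eq_zero_iff_dvd k d).1 h0
    have hk' : A ^ k = g := hk
    rw [← hk', ht, zpow_mul, zpow_natCast, hAd, one_zpow]
  have hsurj : Function.Surjective φ := by
    intro x
    refine ⟨A ^ ((Multiplicative.toAdd x).val : ℤ), ?_⟩
    rw [hφpow]
    simp [ZMod.natCast_val, ZMod.cast_id]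
  exact ⟨MulEquiv.ofBijective φ ⟨hinj, hsurj⟩, hφA⟩
end

section
/- Let d ≥ 5 be an integer and let k = ⌊d/2⌋. In the presented group G on two generators a, b with relators a^d b^d together with a^{d−i} b^i and b^{d−i} a^i for every i ∈ {0} ∪ {2, 3, …, k}, the images of a and b are equal, and G is generated by the image of a; in particular G is commutative. -/
/-!
Write `A`, `B` for the images of `a`, `b`. The relators with `i = 0` give `A^d = B^d = 1`, and
then `A^(d-i) B^i = 1` says `A^i = B^i`. So `A^2 = B^2`, and either `A^3 = B^3` (`d` even, so
`3 ≤ d/2`) or `A^(d+1) = B^(d+1)` (`d` odd, so `d + 1` is even); in both cases `A` and `B`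
agree on two consecutive exponents, hence `A = B`. The group is then cyclic on `A`.
-/

section PowEq

variable {G : Type*} [Group G] {a b : G}

theorem pow_eq_pow_of_pow_eq_one_of_pow_sub_mul_pow_eq_one {n i : ℕ} (hi : i ≤ n)
    (ha : a ^ n = 1) (h : a ^ (n - i) * b ^ i = 1) : a ^ i = b ^ i := by
  have ha' : a ^ (n - i) * a ^ i = 1 := by rw [← pow_add, Nat.sub_add_cancel hi, ha]
  exact mul_left_cancel (ha'.trans h.symm)

theorem eq_of_pow_eq_of_pow_succ_eq {m : ℕ} (h : a ^ m = b ^ m)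
    (hsucc : a ^ (m + 1) = b ^ (m + 1)) : a = b := by
  rw [pow_succ, pow_succ, h] at hsucc
  exact mul_left_cancel hsucc

theorem eq_of_sq_eq_of_pow_eq_one_of_odd {n : ℕ} (hn : Odd n) (ha : a ^ n = 1) (hb : b ^ n = 1)
    (h : a ^ 2 = b ^ 2) : a = b := by
  obtain ⟨m, rfl⟩ := hn
  refine eq_of_pow_eq_of_pow_succ_eq (ha.trans hb.symm) ?_
  rw [show 2 * m + 1 + 1 = 2 * (m + 1) by ring, pow_mul, pow_mul, h]

end PowEq

theorem PresentedGroup.zpowers_of_eq_top {α : Type*} {rels : Set (FreeGroup α)} {x : α}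
    (h : ∀ y, PresentedGroup.of (rels := rels) y = PresentedGroup.of x) :
    Subgroup.zpowers (PresentedGroup.of (rels := rels) x) = ⊤ :=
  eq_top_iff.2 fun g _ ↦
    PresentedGroup.generated_by rels _ (fun y ↦ h y ▸ Subgroup.mem_zpowers _) g

namespace nestRels

variable {d : ℕ}

local notation "A" => PresentedGroup.of (rels := nestRels d) (0 : Fin 2)
local notation "B" => PresentedGroup.of (rels := nestRels d) (1 : Fin 2)

theorem of_pow_sub_mul_of_pow_eq_one {i : ℕ} (hi : i ∈ ({0} ∪ Set.Icc 2 (d / 2) : Set ℕ)) :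
    A ^ (d - i) * B ^ i = 1 ∧ B ^ (d - i) * A ^ i = 1 := by
  have hAB := PresentedGroup.one_of_mem (rels := nestRels d)
    (Or.inr (Set.mem_biUnion hi (Or.inl rfl)) : genA ^ (d - i) * genB ^ i ∈ nestRels d)
  have hBA := PresentedGroup.one_of_mem (rels := nestRels d)
    (Or.inr (Set.mem_biUnion hi (Or.inr rfl)) : genB ^ (d - i) * genA ^ i ∈ nestRels d)
  rw [map_mul, map_pow, map_pow] at hAB hBA
  exact ⟨hAB, hBA⟩

theorem of_zero_pow_eq_one : A ^ d = 1 := by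
  simpa using (of_pow_sub_mul_of_pow_eq_one (Or.inl rfl)).1

theorem of_one_pow_eq_one : B ^ d = 1 := by
  simpa using (of_pow_sub_mul_of_pow_eq_one (Or.inl rfl)).2

theorem of_zero_pow_eq_of_one_pow {i : ℕ} (hi₂ : 2 ≤ i) (hid : i ≤ d / 2) : A ^ i = B ^ i :=
  pow_eq_pow_of_pow_eq_one_of_pow_sub_mul_pow_eq_one (by omega) of_zero_pow_eq_one
    (of_pow_sub_mul_of_pow_eq_one (Or.inr ⟨hi₂, hid⟩)).1

theorem of_zero_eq_of_one (hd : 5 ≤ d) : A = B := by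
  have h2 : A ^ 2 = B ^ 2 := of_zero_pow_eq_of_one_pow le_rfl (by omega)
  rcases Nat.even_or_odd d with ⟨m, hm⟩ | hodd
  · have h3 : A ^ 3 = B ^ 3 := of_zero_pow_eq_of_one_pow (by norm_num) (by omega)
    exact eq_of_pow_eq_of_pow_succ_eq h2 h3
  · exact eq_of_sq_eq_of_pow_eq_one_of_odd hodd of_zero_pow_eq_one of_one_pow_eq_one h2

end nestRels

/-- For `d ≥ 5`, in the presented group `⟨a, b | a^d b^d, a^(d-i) b^i, b^(d-i) a^i
(i ∈ {0} ∪ {2,…,⌊d/2⌋})⟩`, the images of `a` and `b` are equal, the group is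
generated by the image of `a`, and in particular it is commutative. -/
theorem nest_presented_group_abelian (d : ℕ) (hd : 5 ≤ d) :
    (PresentedGroup.of (rels := nestRels d) 0 = PresentedGroup.of 1) ∧
      Subgroup.zpowers (PresentedGroup.of (rels := nestRels d) 0) = ⊤ ∧
      ∀ x y : PresentedGroup (nestRels d), x * y = y * x := by
  have hAB := nestRels.of_zero_eq_of_one hd
  have htop : Subgroup.zpowers (PresentedGroup.of (rels := nestRels d) 0) = ⊤ :=
    PresentedGroup.zpowers_of_eq_top fun y ↦ by fin_cases y <;> simp [hAB]
  have : IsCyclic (PresentedGroup (nestRels d)) :=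
    isCyclic_iff_exists_zpowers_eq_top.2 ⟨_, htop⟩
  exact ⟨hAB, htop, mul_comm'⟩
end

section
/- For every odd integer d ≥ 3, in the presented group on two generators a, b with relators a^d, a^{d−2} b², and b^{d−2} a², the images of a and b are equal. -/
/-- The relators `a^d`, `a^(d-2) b²` and `b^(d-2) a²`. -/
def oddRels (d : ℕ) : Set (FreeGroup (Fin 2)) :=
  {genA ^ d, genA ^ (d - 2) * genB ^ 2, genB ^ (d - 2) * genA ^ 2}

theorem sq_pow_eq_self_of_pow_eq_one {M : Type*} [Monoid M] {x : M} {k : ℕ}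
    (hx : x ^ (2 * k + 1) = 1) : (x ^ 2) ^ (k + 1) = x := by
  rw [← pow_mul, show 2 * (k + 1) = (2 * k + 1) + 1 by ring, pow_succ, hx, one_mul]

theorem eq_of_sq_eq_of_pow_eq_one {M : Type*} [Monoid M] {x y : M} {n : ℕ} (hn : Odd n)
    (hx : x ^ n = 1) (hy : y ^ n = 1) (hxy : x ^ 2 = y ^ 2) : x = y := by
  obtain ⟨k, rfl⟩ := hn
  rw [← sq_pow_eq_self_of_pow_eq_one hx, ← sq_pow_eq_self_of_pow_eq_one hy, hxy]

section Relations

variable {G : Type*} [Group G] {a b : G} {m : ℕ}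

theorem sq_eq_sq_of_pow_add_two_eq_one (ha : a ^ (m + 2) = 1) (hab : a ^ m * b ^ 2 = 1) :
    b ^ 2 = a ^ 2 := by
  rw [pow_add] at ha
  exact (eq_inv_of_mul_eq_one_right hab).trans (eq_inv_of_mul_eq_one_right ha).symm

theorem pow_add_two_eq_one_of_relations (ha : a ^ (m + 2) = 1) (hab : a ^ m * b ^ 2 = 1)
    (hba : b ^ m * a ^ 2 = 1) : b ^ (m + 2) = 1 := by
  rw [pow_add, sq_eq_sq_of_pow_add_two_eq_one ha hab, hba]

theorem eq_of_relations (hodd : Odd (m + 2)) (ha : a ^ (m + 2) = 1) (hab : a ^ m * b ^ 2 = 1)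
    (hba : b ^ m * a ^ 2 = 1) : a = b :=
  eq_of_sq_eq_of_pow_eq_one hodd ha (pow_add_two_eq_one_of_relations ha hab hba)
    (sq_eq_sq_of_pow_add_two_eq_one ha hab).symm

end Relations

/-- For every odd `d ≥ 3`, in the presented group
`⟨a, b | a^d, a^(d-2) b², b^(d-2) a²⟩`, the images of `a` and `b` are equal. -/
theorem odd_rels_force_eq (d : ℕ) (hd : 3 ≤ d) (hodd : Odd d) :
    PresentedGroup.of (rels := oddRels d) 0 = PresentedGroup.of 1 := by
  obtain ⟨m, rfl⟩ : ∃ m, d = m + 2 := ⟨d - 2, by omega⟩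
  -- `PresentedGroup.mk` of a word in `genA`, `genB` is definitionally that word in the `of i`.
  refine eq_of_relations hodd ?_ ?_ ?_
  · exact PresentedGroup.one_of_mem (by simp [oddRels] : genA ^ (m + 2) ∈ oddRels (m + 2))
  · exact PresentedGroup.one_of_mem (by simp [oddRels] : genA ^ m * genB ^ 2 ∈ oddRels (m + 2))
  · exact PresentedGroup.one_of_mem (by simp [oddRels] : genB ^ m * genA ^ 2 ∈ oddRels (m + 2))
end

section
/- The presented group on two generators a, b with relators a⁴ b⁴, a⁴, b⁴, a² b², and b² a² is not commutative. -/
/-- The relators `a⁴ b⁴`, `a⁴`, `b⁴`, `a² b²` and `b² a²`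
(the case of a maximal nest quartic). -/
def quarticRels : Set (FreeGroup (Fin 2)) :=
  {genA ^ 4 * genB ^ 4, genA ^ 4, genB ^ 4, genA ^ 2 * genB ^ 2, genB ^ 2 * genA ^ 2}

/-- Target map to the quaternion group. -/
def qf : Fin 2 → QuaternionGroup 2 := ![QuaternionGroup.a 1, QuaternionGroup.xa 0]

lemma qf_rels : ∀ r ∈ quarticRels, FreeGroup.lift qf r = 1 := by
  intro r hr
  rcases hr with h | h | h | h | h <;> subst h <;>
    simp only [genA, genB, map_mul, map_pow, FreeGroup.lift_apply_of, qf] <;> decide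

/-- The presented group `⟨a, b | a⁴b⁴, a⁴, b⁴, a²b², b²a²⟩` is not commutative. -/
theorem quartic_presented_group_not_commutative :
    ¬ ∀ x y : PresentedGroup quarticRels, x * y = y * x := by
  intro h
  have := h (PresentedGroup.of 0) (PresentedGroup.of 1)
  have h2 := congrArg (PresentedGroup.toGroup qf_rels) this
  simp only [map_mul, PresentedGroup.toGroup.of, qf] at h2
  revert h2; decide
end

section
/- The subspace ℂP² ∖ ℝP² of the complex projective plane is homotopy equivalent to the conic C = {[x : y : z] ∈ ℂP² : x² + y² + z² = 0} (with its subspace topology). -/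
open Projectivization

/-- The complex projective plane, as the projectivization of `ℂ³`. -/
abbrev CP2 : Type := Projectivization ℂ (Fin 3 → ℂ)

noncomputable instance : TopologicalSpace CP2 :=
  inferInstanceAs (TopologicalSpace (Quotient _))

/-- Coordinatewise complex conjugation on `ℂ³`, as a semilinear map over `starRingEnd ℂ`. -/
def conjC3 : (Fin 3 → ℂ) →ₛₗ[starRingEnd ℂ] (Fin 3 → ℂ) where
  toFun v i := starRingEnd ℂ (v i)
  map_add' u v := by funext i; simp
  map_smul' c v := by funext i; simp

lemma conjC3_injective : Function.Injective conjC3 := fun _ _ h =>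
  funext fun i => star_injective (congrFun h i)

/-- The complex conjugation involution of `ℂP²`, induced by coordinatewise
complex conjugation on `ℂ³`. -/
noncomputable def conjCP2 : CP2 → CP2 := Projectivization.map conjC3 conjC3_injective

/-- The set of real points of `ℂP²`: points admitting a representative vector
all of whose coordinates are real. -/
def RP2 : Set CP2 :=
  {p | ∃ (v : Fin 3 → ℝ) (hv : (fun i => (v i : ℂ)) ≠ 0),
    p = Projectivization.mk ℂ (fun i => (v i : ℂ)) hv}

/-- The conic `C = {[v] ∈ ℂP² : v₀² + v₁² + v₂² = 0}`. -/
def conic : Set CP2 := {p | p.rep 0 ^ 2 + p.rep 1 ^ 2 + p.rep 2 ^ 2 = 0}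

/-!
Write `q v = v ⬝ᵥ v` and `b v = ∑ |vᵢ|²`. By the triangle inequality `|q v| ≤ b v`, with
equality exactly when `v` is a complex multiple of a real vector, so `ℂP² ∖ ℝP²` is
`{[v] : |q v| < b v}` and contains the conic `{q = 0}`. For `[v] ∉ ℝP²`, the points `[v - μ v̄]`
with `|μ| < 1` form the disc of the complex line through `[v]` and `[v̄]` containing `[v]`,
and its point on the conic is `μ = q v / s`, where `s` is the larger root of
`s² - 2 (b v) s + |q v|² = 0`. Moving `μ` linearly from `0` to `q v / s` is compatible with
rescaling `v`, fixes the conic, and multiplies the defect `b - |q|` by `(1 + τ |q v| / s)² > 0`,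
so it is a deformation retraction of `ℂP² ∖ ℝP²` onto the conic.
-/

open scoped unitInterval

theorem Projectivization.isOpenQuotientMap_quotientMk {K V : Type*} [DivisionRing K]
    [AddCommGroup V] [Module K V] [TopologicalSpace V] [ContinuousConstSMul K V] :
    IsOpenQuotientMap (Quotient.mk (projectivizationSetoid K V)) := by
  refine ⟨Quotient.mk_surjective, continuous_quot_mk, fun U hU => ?_⟩
  let smulNonzero (c : Kˣ) (w : {v : V // v ≠ 0}) : {v : V // v ≠ 0} :=
    ⟨c • w.1, (smul_ne_zero_iff_ne c).2 w.2⟩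
  have hsat : Quotient.mk (projectivizationSetoid K V) ⁻¹' (Quotient.mk _ '' U)
      = ⋃ c : Kˣ, smulNonzero c ⁻¹' U := by
    ext w
    simp only [Set.mem_preimage, Set.mem_image, Set.mem_iUnion, Quotient.eq]
    constructor
    · rintro ⟨u, hu, c, hc⟩
      exact ⟨c, by convert hu; exact Subtype.ext hc⟩
    · rintro ⟨c, hc⟩
      exact ⟨_, hc, c, rfl⟩
  show IsOpen (Quotient.mk (projectivizationSetoid K V) ⁻¹' _)
  rw [hsat]
  exact isOpen_iUnion fun c =>
    hU.preimage (((continuous_const_smul (c : K)).comp continuous_subtype_val).subtype_mk _)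

theorem nonempty_homotopyEquiv_of_deformationRetraction {Y : Type*} [TopologicalSpace Y]
    {X A : Set Y} (hAX : A ⊆ X) (H : C(I × X, X)) (h0 : ∀ x, H (0, x) = x)
    (h1 : ∀ x, (H (1, x) : Y) ∈ A) (hA : ∀ x : X, (x : Y) ∈ A → H (1, x) = x) :
    Nonempty (ContinuousMap.HomotopyEquiv X A) := by
  let r : C(X, A) := ⟨fun x => ⟨H (1, x), h1 x⟩, by fun_prop⟩
  let i : C(A, X) := ⟨Set.inclusion hAX, continuous_inclusion hAX⟩
  have hri : r.comp i = ContinuousMap.id A :=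
    ContinuousMap.ext fun a => Subtype.ext (congrArg Subtype.val (hA (i a) a.2) :)
  exact ⟨⟨r, i, .symm ⟨{ toContinuousMap := H, map_zero_left := h0, map_one_left := fun _ => rfl }⟩,
    hri ▸ .refl _⟩⟩

noncomputable section

section
variable {ι : Type*} [Fintype ι]

def hermNormSq (v : ι → ℂ) : ℝ := ∑ i, ‖v i‖ ^ 2

lemma hermNormSq_pos {v : ι → ℂ} (hv : v ≠ 0) : 0 < hermNormSq v := by
  obtain ⟨i, hi⟩ := Function.ne_iff.1 hv
  exact Finset.sum_pos' (fun j _ => sq_nonneg ‖v j‖) ⟨i, Finset.mem_univ i, by positivity⟩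

lemma ne_zero_of_hermNormSq_pos {v : ι → ℂ} (hv : 0 < hermNormSq v) : v ≠ 0 := by
  rintro rfl
  simp [hermNormSq] at hv

lemma ofReal_hermNormSq (v : ι → ℂ) : (hermNormSq v : ℂ) = v ⬝ᵥ star v := by
  simp [hermNormSq, dotProduct, Complex.mul_conj']

lemma hermNormSq_smul (c : ℂ) (v : ι → ℂ) : hermNormSq (c • v) = ‖c‖ ^ 2 * hermNormSq v := by
  simp [hermNormSq, Finset.mul_sum, mul_pow]

lemma dotProduct_smul_self (c : ℂ) (v : ι → ℂ) : (c • v) ⬝ᵥ (c • v) = c ^ 2 * (v ⬝ᵥ v) := by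
  rw [smul_dotProduct, dotProduct_smul, smul_eq_mul, smul_eq_mul]; ring

lemma norm_dotProduct_self_le (v : ι → ℂ) : ‖v ⬝ᵥ v‖ ≤ hermNormSq v :=
  (norm_sum_le _ _).trans_eq <| by simp [hermNormSq, sq]

lemma dotProduct_self_sub_smul_star (a : ℂ) (v : ι → ℂ) :
    (v - a • star v) ⬝ᵥ (v - a • star v)
      = v ⬝ᵥ v - 2 * a * hermNormSq v + a ^ 2 * star (v ⬝ᵥ v) := by
  simp only [sub_dotProduct, dotProduct_sub, smul_dotProduct, dotProduct_smul, smul_eq_mul,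
    Matrix.star_dotProduct_star, ofReal_hermNormSq]
  rw [dotProduct_comm (star v) v]; ring

lemma ofReal_hermNormSq_sub_smul_star (a : ℂ) (v : ι → ℂ) :
    (hermNormSq (v - a • star v) : ℂ)
      = (1 + a * star a) * hermNormSq v - star a * (v ⬝ᵥ v) - a * star (v ⬝ᵥ v) := by
  simp only [ofReal_hermNormSq, star_sub, star_smul, star_star, sub_dotProduct, dotProduct_sub,
    smul_dotProduct, dotProduct_smul, smul_eq_mul, Matrix.star_dotProduct_star]
  rw [dotProduct_comm (star v) v]; ring

def isotropicScale (v : ι → ℂ) : ℝ := hermNormSq v + √(hermNormSq v ^ 2 - ‖v ⬝ᵥ v‖ ^ 2)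

def deformToIsotropic (τ : ℝ) (v : ι → ℂ) : ι → ℂ :=
  v - ((τ : ℂ) * (v ⬝ᵥ v) / isotropicScale v) • star v

lemma hermNormSq_le_isotropicScale (v : ι → ℂ) : hermNormSq v ≤ isotropicScale v :=
  le_add_of_nonneg_right (Real.sqrt_nonneg _)

lemma isotropicScale_pos {v : ι → ℂ} (hv : v ≠ 0) : 0 < isotropicScale v :=
  (hermNormSq_pos hv).trans_le (hermNormSq_le_isotropicScale v)

lemma isotropicScale_quadratic (v : ι → ℂ) :
    isotropicScale v ^ 2 - 2 * hermNormSq v * isotropicScale v + ‖v ⬝ᵥ v‖ ^ 2 = 0 := by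
  have hle := norm_dotProduct_self_le v
  have hsq : √(hermNormSq v ^ 2 - ‖v ⬝ᵥ v‖ ^ 2) ^ 2 = hermNormSq v ^ 2 - ‖v ⬝ᵥ v‖ ^ 2 :=
    Real.sq_sqrt (by nlinarith [norm_nonneg (v ⬝ᵥ v)])
  unfold isotropicScale
  linear_combination hsq

lemma isotropicScale_smul (c : ℂ) (v : ι → ℂ) :
    isotropicScale (c • v) = ‖c‖ ^ 2 * isotropicScale v := by
  have hdisc : hermNormSq (c • v) ^ 2 - ‖(c • v) ⬝ᵥ (c • v)‖ ^ 2
      = (‖c‖ ^ 2) ^ 2 * (hermNormSq v ^ 2 - ‖v ⬝ᵥ v‖ ^ 2) := by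
    rw [hermNormSq_smul, dotProduct_smul_self, norm_mul, norm_pow]; ring
  rw [isotropicScale, isotropicScale, hdisc, Real.sqrt_mul (by positivity),
    Real.sqrt_sq (by positivity), hermNormSq_smul]
  ring

lemma deformToIsotropic_smul (τ : ℝ) {c : ℂ} (hc : c ≠ 0) (v : ι → ℂ) :
    deformToIsotropic τ (c • v) = c • deformToIsotropic τ v := by
  have hnorm : (‖c‖ : ℂ) ^ 2 = c * star c := by
    rw [Complex.star_def, Complex.mul_conj']
  have hc' : star c ≠ 0 := star_ne_zero.2 hc
  simp only [deformToIsotropic, dotProduct_smul_self, isotropicScale_smul, star_smul, smul_sub,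
    smul_smul]
  congr 2
  push_cast
  rw [hnorm]
  by_cases hs : (isotropicScale v : ℂ) = 0
  · simp [hs]
  · field_simp

lemma deformToIsotropic_zero (v : ι → ℂ) : deformToIsotropic 0 v = v := by
  simp [deformToIsotropic]

lemma deformToIsotropic_of_dotProduct_self_eq_zero {v : ι → ℂ} (h : v ⬝ᵥ v = 0) (τ : ℝ) :
    deformToIsotropic τ v = v := by
  simp [deformToIsotropic, h]

lemma dotProduct_self_deformToIsotropic (τ : ℝ) {v : ι → ℂ} (hv : v ≠ 0) :
    deformToIsotropic τ v ⬝ᵥ deformToIsotropic τ v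
      = ((1 - τ) * (1 - τ * (‖v ⬝ᵥ v‖ / isotropicScale v) ^ 2) : ℝ) * (v ⬝ᵥ v) := by
  have hs : (isotropicScale v : ℂ) ≠ 0 := by exact_mod_cast (isotropicScale_pos hv).ne'
  have hquad : ((isotropicScale v ^ 2 - 2 * hermNormSq v * isotropicScale v
      + ‖v ⬝ᵥ v‖ ^ 2 : ℝ) : ℂ) = 0 := by exact_mod_cast isotropicScale_quadratic v
  have hconj : (v ⬝ᵥ v) * star (v ⬝ᵥ v) = ((‖v ⬝ᵥ v‖ ^ 2 : ℝ) : ℂ) := by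
    rw [Complex.star_def, Complex.mul_conj']; push_cast; rfl
  rw [deformToIsotropic, dotProduct_self_sub_smul_star]
  push_cast at hquad hconj ⊢
  field_simp
  linear_combination (v ⬝ᵥ v) * (τ : ℂ) ^ 2 * hconj + (v ⬝ᵥ v) * (τ : ℂ) * hquad

lemma hermNormSq_deformToIsotropic (τ : ℝ) {v : ι → ℂ} (hv : v ≠ 0) :
    hermNormSq (deformToIsotropic τ v)
      = (1 + (τ * ‖v ⬝ᵥ v‖ / isotropicScale v) ^ 2) * hermNormSq v
        - 2 * τ * ‖v ⬝ᵥ v‖ ^ 2 / isotropicScale v := by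
  have hs : (isotropicScale v : ℂ) ≠ 0 := by exact_mod_cast (isotropicScale_pos hv).ne'
  have hconj : (v ⬝ᵥ v) * star (v ⬝ᵥ v) = (‖v ⬝ᵥ v‖ : ℂ) ^ 2 := by
    rw [Complex.star_def, Complex.mul_conj']
  apply Complex.ofReal_injective
  rw [deformToIsotropic, ofReal_hermNormSq_sub_smul_star]
  simp only [star_div₀, star_mul', Complex.star_def, Complex.conj_ofReal] at hconj ⊢
  push_cast
  field_simp
  linear_combination ((τ : ℂ) ^ 2 * hermNormSq v - 2 * τ * isotropicScale v) * hconj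

lemma hermNormSq_sub_norm_deformToIsotropic {τ : ℝ} (h1 : τ ≤ 1) {v : ι → ℂ}
    (hv : v ≠ 0) :
    hermNormSq (deformToIsotropic τ v) - ‖deformToIsotropic τ v ⬝ᵥ deformToIsotropic τ v‖
      = (hermNormSq v - ‖v ⬝ᵥ v‖) * (1 + τ * ‖v ⬝ᵥ v‖ / isotropicScale v) ^ 2 := by
  have hs := isotropicScale_pos hv
  have hm : ‖v ⬝ᵥ v‖ ≤ isotropicScale v :=
    (norm_dotProduct_self_le v).trans (hermNormSq_le_isotropicScale v)
  have hk : (‖v ⬝ᵥ v‖ / isotropicScale v) ^ 2 ≤ 1 := by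
    rw [sq_le_one_iff₀ (by positivity)]; exact div_le_one_of_le₀ hm hs.le
  have hfactor : 0 ≤ (1 - τ) * (1 - τ * (‖v ⬝ᵥ v‖ / isotropicScale v) ^ 2) :=
    mul_nonneg (by linarith) (by nlinarith)
  rw [dotProduct_self_deformToIsotropic τ hv, norm_mul, Complex.norm_real,
    Real.norm_of_nonneg hfactor, hermNormSq_deformToIsotropic τ hv]
  field_simp
  linear_combination τ * ‖v ⬝ᵥ v‖ * isotropicScale_quadratic v

lemma norm_dotProduct_self_deformToIsotropic_lt {v : ι → ℂ} (h : ‖v ⬝ᵥ v‖ < hermNormSq v)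
    {τ : ℝ} (h0 : 0 ≤ τ) (h1 : τ ≤ 1) :
    ‖deformToIsotropic τ v ⬝ᵥ deformToIsotropic τ v‖ < hermNormSq (deformToIsotropic τ v) := by
  have hv : v ≠ 0 := ne_zero_of_hermNormSq_pos ((norm_nonneg _).trans_lt h)
  have hdefect := hermNormSq_sub_norm_deformToIsotropic h1 hv
  have hs := isotropicScale_pos hv
  have hpos : 0 < (hermNormSq v - ‖v ⬝ᵥ v‖) * (1 + τ * ‖v ⬝ᵥ v‖ / isotropicScale v) ^ 2 :=
    mul_pos (sub_pos.2 h) (by positivity)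
  linarith

lemma deformToIsotropic_ne_zero {v : ι → ℂ} (h : ‖v ⬝ᵥ v‖ < hermNormSq v) {τ : ℝ}
    (h0 : 0 ≤ τ) (h1 : τ ≤ 1) : deformToIsotropic τ v ≠ 0 :=
  ne_zero_of_hermNormSq_pos
    ((norm_nonneg _).trans_lt (norm_dotProduct_self_deformToIsotropic_lt h h0 h1))

lemma dotProduct_self_deformToIsotropic_one {v : ι → ℂ} (hv : v ≠ 0) :
    deformToIsotropic 1 v ⬝ᵥ deformToIsotropic 1 v = 0 := by
  simp [dotProduct_self_deformToIsotropic 1 hv]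

lemma re_dotProduct_self (w : ι → ℂ) :
    (w ⬝ᵥ w).re = hermNormSq w - 2 * ∑ i, (w i).im ^ 2 := by
  simp only [dotProduct, Complex.re_sum, hermNormSq, Complex.mul_re, Complex.sq_norm,
    Complex.normSq_apply, Finset.mul_sum, ← Finset.sum_sub_distrib]
  exact Finset.sum_congr rfl fun i _ => by ring

lemma norm_dotProduct_self_smul_ofReal (c : ℂ) (u : ι → ℝ) :
    ‖(c • fun i => (u i : ℂ)) ⬝ᵥ (c • fun i => (u i : ℂ))‖
      = hermNormSq (c • fun i => (u i : ℂ)) := by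
  have hreal : ((fun i => (u i : ℂ)) ⬝ᵥ fun i => (u i : ℂ)) = ((∑ i, u i ^ 2 : ℝ) : ℂ) := by
    simp [dotProduct, sq]
  rw [dotProduct_smul_self, hermNormSq_smul, norm_mul, norm_pow, hreal, Complex.norm_real,
    Real.norm_of_nonneg (Finset.sum_nonneg fun i _ => sq_nonneg (u i))]
  simp [hermNormSq]

lemma exists_smul_ofReal_of_norm_dotProduct_self_eq {v : ι → ℂ}
    (h : ‖v ⬝ᵥ v‖ = hermNormSq v) : ∃ c : ℂ, c ≠ 0 ∧ ∃ u : ι → ℝ, v = c • fun i => (u i : ℂ) := by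
  set c := Complex.exp (((v ⬝ᵥ v).arg / 2 : ℝ) * Complex.I)
  have hc : ‖c‖ = 1 := Complex.norm_exp_ofReal_mul_I _
  have hc0 : c ≠ 0 := Complex.exp_ne_zero _
  have hcq : c ^ 2 * ‖v ⬝ᵥ v‖ = v ⬝ᵥ v := by
    conv_rhs => rw [← Complex.norm_mul_exp_arg_mul_I (v ⬝ᵥ v)]
    rw [← Complex.exp_nat_mul]
    push_cast; ring_nf
  set w := c⁻¹ • v
  have hw : w ⬝ᵥ w = ‖v ⬝ᵥ v‖ := by
    rw [dotProduct_smul_self]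
    conv_lhs => rw [← hcq]
    field_simp
  have him : ∑ i, (w i).im ^ 2 = 0 := by
    have hre := re_dotProduct_self w
    rw [hw, Complex.ofReal_re, h, hermNormSq_smul, norm_inv, hc] at hre
    linarith
  refine ⟨c, hc0, fun i => (w i).re, funext fun i => ?_⟩
  have hi : (w i).im = 0 :=
    pow_eq_zero_iff two_ne_zero |>.1 <|
      (Finset.sum_eq_zero_iff_of_nonneg fun j _ => sq_nonneg (w j).im).1 him i (Finset.mem_univ i)
  have hreal : ((w i).re : ℂ) = w i := Complex.ext rfl (by simp [hi])
  rw [Pi.smul_apply, smul_eq_mul, hreal]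
  exact (mul_inv_cancel_left₀ hc0 (v i)).symm

lemma continuous_isotropicScale : Continuous (isotropicScale : (ι → ℂ) → ℝ) := by
  unfold isotropicScale hermNormSq
  fun_prop

lemma Continuous.deformToIsotropic {X : Type*} [TopologicalSpace X] {f : X → ℝ} {g : X → ι → ℂ}
    (hf : Continuous f) (hg : Continuous g) (hg0 : ∀ x, g x ≠ 0) :
    Continuous fun x => deformToIsotropic (f x) (g x) := by
  have hs : ∀ x, (isotropicScale (g x) : ℂ) ≠ 0 := fun x => by
    exact_mod_cast (isotropicScale_pos (hg0 x)).ne'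
  have hscale : Continuous fun x => (isotropicScale (g x) : ℂ) := by
    have := continuous_isotropicScale (ι := ι); fun_prop
  unfold _root_.deformToIsotropic
  exact hg.sub
    (((by fun_prop : Continuous fun x => (f x : ℂ) * (g x ⬝ᵥ g x)).div hscale hs).smul hg.star)

end

lemma mk_mem_RP2_iff {v : Fin 3 → ℂ} (hv : v ≠ 0) :
    mk ℂ v hv ∈ RP2 ↔ ‖v ⬝ᵥ v‖ = hermNormSq v := by
  constructor
  · rintro ⟨u, hu, heq⟩
    obtain ⟨c, rfl⟩ := (mk_eq_mk_iff' ℂ _ _ hv hu).1 heq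
    exact norm_dotProduct_self_smul_ofReal c u
  · intro h
    obtain ⟨c, hc, u, rfl⟩ := exists_smul_ofReal_of_norm_dotProduct_self_eq h
    have hu : (fun i => (u i : ℂ)) ≠ 0 := fun h0 => hv (by rw [h0, smul_zero])
    exact ⟨u, hu, (mk_eq_mk_iff' ℂ _ _ hv hu).2 ⟨c, rfl⟩⟩

lemma mk_notMem_RP2_iff {v : Fin 3 → ℂ} (hv : v ≠ 0) :
    mk ℂ v hv ∉ RP2 ↔ ‖v ⬝ᵥ v‖ < hermNormSq v := by
  rw [mk_mem_RP2_iff, (norm_dotProduct_self_le v).lt_iff_ne]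

lemma mk_mem_conic_iff {v : Fin 3 → ℂ} (hv : v ≠ 0) : mk ℂ v hv ∈ conic ↔ v ⬝ᵥ v = 0 := by
  have hconic : mk ℂ v hv ∈ conic ↔ (mk ℂ v hv).rep ⬝ᵥ (mk ℂ v hv).rep = 0 := by
    simp [conic, dotProduct, Fin.sum_univ_three, sq]
  obtain ⟨a, ha⟩ := exists_smul_eq_mk_rep ℂ v hv
  rw [hconic, ← ha, Units.smul_def, dotProduct_smul_self, mul_eq_zero,
    or_iff_right (pow_ne_zero 2 a.ne_zero)]

lemma conic_subset_compl_RP2 : conic ⊆ RP2ᶜ := by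
  intro p hpC hpR
  rw [← p.mk_rep] at hpC hpR
  rw [mk_mem_RP2_iff, (mk_mem_conic_iff _).1 hpC, norm_zero] at hpR
  exact (hermNormSq_pos p.rep_nonzero).ne' hpR.symm

def conicDeformationMk (t : I) (v : Fin 3 → ℂ) (hv : ‖v ⬝ᵥ v‖ < hermNormSq v) : ↥RP2ᶜ :=
  ⟨mk ℂ (deformToIsotropic t v) (deformToIsotropic_ne_zero hv t.2.1 t.2.2),
    (mk_notMem_RP2_iff _).2 (norm_dotProduct_self_deformToIsotropic_lt hv t.2.1 t.2.2)⟩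

lemma norm_dotProduct_self_rep_lt (p : ↥RP2ᶜ) : ‖p.1.rep ⬝ᵥ p.1.rep‖ < hermNormSq p.1.rep :=
  (mk_notMem_RP2_iff _).1 (by rw [mk_rep]; exact p.2)

def conicDeformation (t : I) (p : ↥RP2ᶜ) : ↥RP2ᶜ :=
  conicDeformationMk t p.1.rep (norm_dotProduct_self_rep_lt p)

lemma conicDeformation_mk (t : I) {v : Fin 3 → ℂ} (hv : v ≠ 0) (h : mk ℂ v hv ∈ RP2ᶜ) :
    conicDeformation t ⟨mk ℂ v hv, h⟩ = conicDeformationMk t v ((mk_notMem_RP2_iff hv).1 h) := by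
  obtain ⟨a, ha⟩ := exists_smul_eq_mk_rep ℂ v hv
  refine Subtype.ext <| (mk_eq_mk_iff' ℂ _ _ _ _).2 ⟨a, ?_⟩
  rw [← deformToIsotropic_smul _ a.ne_zero, ← Units.smul_def, ha]

lemma continuous_conicDeformation :
    Continuous fun x : I × ↥RP2ᶜ => conicDeformation x.1 x.2 := by
  have hmk : IsOpenQuotientMap (mk' ℂ : {v : Fin 3 → ℂ // v ≠ 0} → CP2) :=
    Projectivization.isOpenQuotientMap_quotientMk
  have hπ := (IsOpenQuotientMap.id (X := I)).prodMap (hmk.restrictPreimage RP2ᶜ)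
  rw [← hπ.continuous_comp_iff]
  have hlift : (fun x : I × ↥RP2ᶜ => conicDeformation x.1 x.2) ∘
      Prod.map id (RP2ᶜ.restrictPreimage (mk' ℂ))
        = fun x => conicDeformationMk x.1 x.2.1.1 ((mk_notMem_RP2_iff x.2.1.2).1 x.2.2) :=
    funext fun x => conicDeformation_mk x.1 x.2.1.2 x.2.2
  rw [hlift]
  refine Continuous.subtype_mk (hmk.continuous.comp (Continuous.subtype_mk ?_ _)) _
  exact Continuous.deformToIsotropic (by fun_prop) (by fun_prop) fun x => x.2.1.2

lemma conicDeformation_zero (p : ↥RP2ᶜ) : conicDeformation 0 p = p :=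
  Subtype.ext <| by simp [conicDeformation, conicDeformationMk, deformToIsotropic_zero]

lemma conicDeformation_one_mem_conic (p : ↥RP2ᶜ) : (conicDeformation 1 p : CP2) ∈ conic :=
  (mk_mem_conic_iff _).2 (dotProduct_self_deformToIsotropic_one p.1.rep_nonzero)

lemma conicDeformation_of_mem_conic (t : I) (p : ↥RP2ᶜ) (hp : (p : CP2) ∈ conic) :
    conicDeformation t p = p := by
  have hq : p.1.rep ⬝ᵥ p.1.rep = 0 := by
    rw [← p.1.mk_rep] at hp; exact (mk_mem_conic_iff _).1 hp
  exact Subtype.ext <| by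
    simp [conicDeformation, conicDeformationMk, deformToIsotropic_of_dotProduct_self_eq_zero hq]

end

/-- The subspace `ℂP² ∖ ℝP²` is homotopy equivalent to the conic
`C = {[x : y : z] ∈ ℂP² : x² + y² + z² = 0}`. -/
theorem complement_RP2_homotopyEquiv_conic :
    Nonempty (ContinuousMap.HomotopyEquiv (↥(RP2ᶜ)) (↥conic)) :=
  nonempty_homotopyEquiv_of_deformationRetraction conic_subset_compl_RP2
    ⟨fun x => conicDeformation x.1 x.2, continuous_conicDeformation⟩ conicDeformation_zero
    conicDeformation_one_mem_conic fun p hp => conicDeformation_of_mem_conic 1 p hp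
end

section
/- Let d ≥ 1 and let ℓ₁, …, ℓ_d be nonzero ℝ-linear forms on ℝ³, pairwise non-proportional, each extended ℂ-linearly to ℂ³. Let ℂL_i = {[v] ∈ ℂP² : ℓ_i(v) = 0} be the corresponding complex lines, let ℂA₀ = ℂL₁ ∪ … ∪ ℂL_d, and let Ṽ = C ∩ ℂA₀. Then the subspace ℂP² ∖ (ℝP² ∪ ℂA₀) is homeomorphic to the product (C ∖ Ṽ) × ℝ². -/
open Projectivization

/-- The `ℂ`-linear extension to `ℂ³` of an `ℝ`-linear form `ℓ` on `ℝ³`. -/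
noncomputable def extC (l : (Fin 3 → ℝ) →ₗ[ℝ] ℝ) : (Fin 3 → ℂ) → ℂ :=
  fun v => ∑ i, (l (Pi.single i 1) : ℂ) * v i

/-- The complex line in `ℂP²` cut out by (the `ℂ`-linear extension of)
a real linear form `ℓ`. -/
noncomputable def cLine (l : (Fin 3 → ℝ) →ₗ[ℝ] ℝ) : Set CP2 :=
  {p | extC l p.rep = 0}

/-! A point `[v] ∉ ℝP²` lies with `[v̄]` on a real line, which meets the conic `C` in two conjugate
points `[z]`, `[z̄]`, labelled so that `v ∝ z̄ + t z` with `|t| < 1`. Sending `[v] ↦ [z]` exhibits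
`ℂP² ∖ ℝP²` as an open-disc bundle over `C`. For a real linear form `ℓ`,
`ℓ (z̄ + t z) = conj (ℓ z) + t ℓ z` vanishes for `|t| < 1` only if `ℓ z = 0`, so `ℂL ∖ ℝL` is the
union of the fibres over `C ∩ ℂL`. Over `C ∖ Ṽ` the bundle is trivialized by normalizing `z` to
`ℓ₁ z = 1`, and the open disc is homeomorphic to `ℝ²`. -/

open Complex (normSq)
open scoped ComplexConjugate

namespace ConicFibration

section Vectors

variable {ι : Type*} [Fintype ι]

def sqNorm (v : ι → ℂ) : ℝ := ∑ i, normSq (v i)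

lemma ofReal_sqNorm (v : ι → ℂ) : (sqNorm v : ℂ) = v ⬝ᵥ star v := by
  simp [sqNorm, dotProduct, Complex.mul_conj]

lemma sqNorm_nonneg (v : ι → ℂ) : 0 ≤ sqNorm v :=
  Finset.sum_nonneg fun i _ => Complex.normSq_nonneg (v i)

lemma sqNorm_pos {v : ι → ℂ} (hv : v ≠ 0) : 0 < sqNorm v := by
  obtain ⟨i, hi⟩ := Function.ne_iff.1 hv
  exact Finset.sum_pos' (fun j _ => Complex.normSq_nonneg (v j))
    ⟨i, Finset.mem_univ i, Complex.normSq_pos.2 hi⟩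

lemma sqNorm_smul (a : ℂ) (v : ι → ℂ) : sqNorm (a • v) = normSq a * sqNorm v := by
  simp [sqNorm, Finset.mul_sum]

lemma star_dotProduct_star_self (v : ι → ℂ) : star v ⬝ᵥ star v = star (v ⬝ᵥ v) :=
  Matrix.star_dotProduct_star v v

lemma dotProduct_star_comm (v : ι → ℂ) : star v ⬝ᵥ v = v ⬝ᵥ star v := dotProduct_comm _ _

/-- Lagrange's identity for `v` and `conj v`. -/
lemma sq_sqNorm_sub_normSq_dotProduct (v : ι → ℂ) :
    sqNorm v ^ 2 - normSq (v ⬝ᵥ v) = 2 * ∑ i, ∑ j, (v i * conj (v j)).im ^ 2 := by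
  have hterm : ∀ i j, normSq (v i) * normSq (v j) - (v i ^ 2 * conj (v j) ^ 2).re
      = 2 * (v i * conj (v j)).im ^ 2 := fun i j => by
    simp only [Complex.normSq_apply, pow_two, Complex.mul_re, Complex.mul_im,
      Complex.conj_re, Complex.conj_im]
    ring
  have hq : (normSq (v ⬝ᵥ v) : ℂ) = ∑ i, ∑ j, v i ^ 2 * conj (v j) ^ 2 := by
    rw [← Complex.mul_conj, dotProduct, map_sum, Finset.sum_mul_sum]
    simp [pow_two]
  have hq' : normSq (v ⬝ᵥ v) = ∑ i, ∑ j, (v i ^ 2 * conj (v j) ^ 2).re := by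
    simpa [Complex.re_sum] using congrArg Complex.re hq
  rw [hq', sq, sqNorm, Finset.sum_mul_sum, ← Finset.sum_sub_distrib, Finset.mul_sum]
  refine Finset.sum_congr rfl fun i _ => ?_
  rw [← Finset.sum_sub_distrib, Finset.mul_sum]
  exact Finset.sum_congr rfl fun j _ => hterm i j

lemma normSq_dotProduct_self_le (v : ι → ℂ) : normSq (v ⬝ᵥ v) ≤ sqNorm v ^ 2 := by
  have := sq_sqNorm_sub_normSq_dotProduct v
  have : 0 ≤ ∑ i, ∑ j, (v i * conj (v j)).im ^ 2 := by positivity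
  linarith

lemma norm_dotProduct_self_le (v : ι → ℂ) : ‖v ⬝ᵥ v‖ ≤ sqNorm v := by
  rw [← sq_le_sq₀ (norm_nonneg _) (sqNorm_nonneg v), Complex.sq_norm]
  exact normSq_dotProduct_self_le v

/-- `‖v ∧ conj v‖`; it vanishes exactly when `v` is a multiple of a real vector. -/
noncomputable def wedgeNorm (v : ι → ℂ) : ℝ := √(sqNorm v ^ 2 - normSq (v ⬝ᵥ v))

lemma sq_wedgeNorm (v : ι → ℂ) : wedgeNorm v ^ 2 = sqNorm v ^ 2 - normSq (v ⬝ᵥ v) :=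
  Real.sq_sqrt (sub_nonneg.2 (normSq_dotProduct_self_le v))

lemma wedgeNorm_nonneg (v : ι → ℂ) : 0 ≤ wedgeNorm v := Real.sqrt_nonneg _

lemma wedgeNorm_eq_zero_iff {v : ι → ℂ} :
    wedgeNorm v = 0 ↔ ∀ i j, (v i * conj (v j)).im = 0 := by
  rw [wedgeNorm, Real.sqrt_eq_zero (sub_nonneg.2 (normSq_dotProduct_self_le v)),
    sq_sqNorm_sub_normSq_dotProduct, mul_eq_zero, or_iff_right two_ne_zero,
    Finset.sum_eq_zero_iff_of_nonneg fun i _ => by positivity]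
  simp [Finset.sum_eq_zero_iff_of_nonneg, sq_nonneg]

lemma wedgeNorm_smul (a : ℂ) (v : ι → ℂ) : wedgeNorm (a • v) = normSq a * wedgeNorm v := by
  have h : sqNorm (a • v) ^ 2 - normSq (a • v ⬝ᵥ a • v)
      = normSq a ^ 2 * (sqNorm v ^ 2 - normSq (v ⬝ᵥ v)) := by
    simp only [sqNorm_smul, dotProduct_smul, smul_dotProduct, smul_eq_mul, map_mul]
    ring
  rw [wedgeNorm, h, Real.sqrt_mul (sq_nonneg _), Real.sqrt_sq (Complex.normSq_nonneg a),
    wedgeNorm]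

lemma normSq_lt_one_of_norm_lt_one {t : ℂ} (ht : ‖t‖ < 1) : normSq t < 1 := by
  rw [← Complex.sq_norm]
  exact pow_lt_one₀ (norm_nonneg t) ht two_ne_zero

/-- The isotropic vector `z` in the span of `v` and `conj v` with `v ∝ conj z + t z`, `|t| < 1`. -/
noncomputable def conicPoint (v : ι → ℂ) : ι → ℂ :=
  ((sqNorm v + wedgeNorm v : ℝ) : ℂ) • star v - conj (v ⬝ᵥ v) • v

def fiberPoint (z : ι → ℂ) (t : ℂ) : ι → ℂ := star z + t • z

lemma ofReal_sq_wedgeNorm (v : ι → ℂ) :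
    (wedgeNorm v : ℂ) ^ 2 = (sqNorm v : ℂ) ^ 2 - (v ⬝ᵥ v) * conj (v ⬝ᵥ v) := by
  rw [← Complex.ofReal_pow, sq_wedgeNorm]
  push_cast
  rw [Complex.mul_conj]

lemma conicPoint_dotProduct_self (v : ι → ℂ) : conicPoint v ⬝ᵥ conicPoint v = 0 := by
  have hN := ofReal_sqNorm v
  have hs := ofReal_sq_wedgeNorm v
  simp only [conicPoint, sub_dotProduct, dotProduct_sub, smul_dotProduct, dotProduct_smul,
    smul_eq_mul, star_dotProduct_star_self, dotProduct_star_comm, Complex.star_def]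
  push_cast
  linear_combination conj (v ⬝ᵥ v) * hs + 2 * conj (v ⬝ᵥ v) * (sqNorm v + wedgeNorm v : ℂ) * hN

lemma dotProduct_conicPoint (v : ι → ℂ) :
    v ⬝ᵥ conicPoint v = ((wedgeNorm v * (sqNorm v + wedgeNorm v) : ℝ) : ℂ) := by
  have hN := ofReal_sqNorm v
  have hs := ofReal_sq_wedgeNorm v
  simp only [conicPoint, dotProduct_sub, dotProduct_smul, smul_eq_mul]
  push_cast
  linear_combination -hs - (sqNorm v + wedgeNorm v : ℂ) * hN

lemma conicPoint_ne_zero {v : ι → ℂ} (hv : v ≠ 0) (hs : 0 < wedgeNorm v) :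
    conicPoint v ≠ 0 := by
  intro h
  have h0 := dotProduct_conicPoint v
  rw [h, dotProduct_zero, eq_comm, Complex.ofReal_eq_zero] at h0
  have := sqNorm_pos hv
  exact (by positivity : wedgeNorm v * (sqNorm v + wedgeNorm v) ≠ 0) h0

lemma conicPoint_smul (a : ℂ) (v : ι → ℂ) :
    conicPoint (a • v) = ((normSq a : ℂ) * conj a) • conicPoint v := by
  have ha : (normSq a : ℂ) = a * conj a := (Complex.mul_conj a).symm
  ext i
  simp only [conicPoint, sqNorm_smul, wedgeNorm_smul, dotProduct_smul, smul_dotProduct,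
    smul_eq_mul, Pi.sub_apply, Pi.smul_apply, Pi.star_apply, star_mul', Complex.star_def, map_mul]
  push_cast
  linear_combination (conj a * conj (v ⬝ᵥ v) * v i) * ha

lemma fiberPoint_conicPoint {v : ι → ℂ} (hv : v ≠ 0) :
    fiberPoint (conicPoint v) ((v ⬝ᵥ v) / (sqNorm v + wedgeNorm v : ℝ))
      = ((2 * wedgeNorm v : ℝ) : ℂ) • v := by
  have hm : ((sqNorm v + wedgeNorm v : ℝ) : ℂ) ≠ 0 := by
    have := sqNorm_pos hv; have := wedgeNorm_nonneg v
    exact_mod_cast (by positivity : sqNorm v + wedgeNorm v ≠ 0)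
  have hs := ofReal_sq_wedgeNorm v
  ext i
  simp only [fiberPoint, conicPoint, Pi.add_apply, Pi.smul_apply, Pi.sub_apply,
    Pi.star_apply, star_sub, star_smul, star_star, smul_eq_mul, Complex.star_def,
    Complex.conj_ofReal, Complex.conj_conj]
  field_simp
  push_cast at hm ⊢
  linear_combination (-(v i)) * hs

lemma fiberPoint_smul (z : ι → ℂ) (t : ℂ) {c : ℂ} (hc : c ≠ 0) :
    fiberPoint (c • z) (t * conj c / c) = conj c • fiberPoint z t := by
  ext i
  simp only [fiberPoint, Pi.add_apply, Pi.smul_apply, Pi.star_apply, star_smul, smul_eq_mul,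
    Complex.star_def]
  field_simp

lemma fiberPoint_dotProduct_self {z : ι → ℂ} (hz : z ⬝ᵥ z = 0) (t : ℂ) :
    fiberPoint z t ⬝ᵥ fiberPoint z t = 2 * t * sqNorm z := by
  have hN := ofReal_sqNorm z
  simp only [fiberPoint, add_dotProduct, dotProduct_add, smul_dotProduct, dotProduct_smul,
    smul_eq_mul, star_dotProduct_star_self, dotProduct_star_comm, hz, star_zero]
  linear_combination (-2) * t * hN

lemma sqNorm_fiberPoint {z : ι → ℂ} (hz : z ⬝ᵥ z = 0) (t : ℂ) :
    sqNorm (fiberPoint z t) = (1 + normSq t) * sqNorm z := by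
  have hN := ofReal_sqNorm z
  have ht : (normSq t : ℂ) = t * conj t := (Complex.mul_conj t).symm
  apply Complex.ofReal_injective
  rw [ofReal_sqNorm]
  simp only [fiberPoint, star_add, star_smul, star_star, add_dotProduct, dotProduct_add,
    smul_dotProduct, dotProduct_smul, smul_eq_mul, star_dotProduct_star_self,
    dotProduct_star_comm, hz, star_zero, Complex.star_def]
  push_cast
  linear_combination (-(1 + t * conj t)) * hN - (sqNorm z : ℂ) * ht

lemma wedgeNorm_fiberPoint {z : ι → ℂ} (hz : z ⬝ᵥ z = 0) {t : ℂ} (ht : normSq t ≤ 1) :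
    wedgeNorm (fiberPoint z t) = (1 - normSq t) * sqNorm z := by
  have h : sqNorm (fiberPoint z t) ^ 2 - normSq (fiberPoint z t ⬝ᵥ fiberPoint z t)
      = ((1 - normSq t) * sqNorm z) ^ 2 := by
    rw [sqNorm_fiberPoint hz, fiberPoint_dotProduct_self hz]
    norm_num [Complex.normSq_mul, Complex.normSq_ofReal]
    ring
  rw [wedgeNorm, h, Real.sqrt_sq (mul_nonneg (by linarith) (sqNorm_nonneg z))]

lemma conicPoint_fiberPoint {z : ι → ℂ} (hz : z ⬝ᵥ z = 0) {t : ℂ} (ht : normSq t ≤ 1) :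
    conicPoint (fiberPoint z t) = ((2 * (1 - normSq t) * sqNorm z : ℝ) : ℂ) • z := by
  have ht' : (normSq t : ℂ) = t * conj t := (Complex.mul_conj t).symm
  rw [conicPoint, sqNorm_fiberPoint hz, wedgeNorm_fiberPoint hz ht,
    fiberPoint_dotProduct_self hz]
  ext i
  simp only [fiberPoint, Pi.sub_apply, Pi.smul_apply, Pi.add_apply, Pi.star_apply, star_add,
    star_smul, star_star, smul_eq_mul, Complex.star_def, map_mul, map_ofNat, Complex.conj_ofReal]
  push_cast
  linear_combination (2 * (sqNorm z : ℂ) * z i) * ht'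

@[fun_prop]
lemma continuous_sqNorm : Continuous (sqNorm : (ι → ℂ) → ℝ) := by
  unfold sqNorm
  fun_prop

@[fun_prop]
lemma continuous_wedgeNorm : Continuous (wedgeNorm : (ι → ℂ) → ℝ) := by
  unfold wedgeNorm
  fun_prop

lemma continuous_conicPoint : Continuous (conicPoint : (ι → ℂ) → ι → ℂ) := by
  unfold conicPoint
  fun_prop

end Vectors

section LinearForm

variable (l : (Fin 3 → ℝ) →ₗ[ℝ] ℝ)

lemma extC_smul (a : ℂ) (v : Fin 3 → ℂ) : extC l (a • v) = a * extC l v := by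
  simp only [extC, Pi.smul_apply, smul_eq_mul, Finset.mul_sum]
  exact Finset.sum_congr rfl fun i _ => by ring

lemma extC_add (v w : Fin 3 → ℂ) : extC l (v + w) = extC l v + extC l w := by
  simp only [extC, Pi.add_apply, mul_add, Finset.sum_add_distrib]

lemma extC_star (v : Fin 3 → ℂ) : extC l (star v) = conj (extC l v) := by
  simp [extC, map_sum]

lemma continuous_extC : Continuous (extC l) := by
  unfold extC
  fun_prop

lemma extC_fiberPoint (z : Fin 3 → ℂ) (t : ℂ) :
    extC l (fiberPoint z t) = conj (extC l z) + t * extC l z := by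
  rw [fiberPoint, extC_add, extC_star, extC_smul]

lemma extC_fiberPoint_ne_zero {z : Fin 3 → ℂ} (hz : extC l z ≠ 0) {t : ℂ} (ht : ‖t‖ < 1) :
    extC l (fiberPoint z t) ≠ 0 := by
  intro h
  rw [extC_fiberPoint, add_eq_zero_iff_eq_neg] at h
  have h' := congrArg norm h
  rw [Complex.norm_conj, norm_neg, norm_mul] at h'
  have := norm_pos_iff.2 hz
  nlinarith

lemma extC_conicPoint_ne_zero {v : Fin 3 → ℂ} (hv : v ≠ 0) (hs : 0 < wedgeNorm v)
    (hl : extC l v ≠ 0) : extC l (conicPoint v) ≠ 0 := by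
  intro h
  have h' := congrArg (extC l) (fiberPoint_conicPoint hv)
  rw [extC_fiberPoint, h, extC_smul, map_zero, mul_zero, add_zero, eq_comm] at h'
  exact mul_ne_zero (by exact_mod_cast (by positivity : 2 * wedgeNorm v ≠ 0)) hl h'

/-- The coordinate of `[v]` in the fiber over `[conicPoint v]`, normalized by `l` to be
independent of the representative `v`. -/
noncomputable def fiberCoord (v : Fin 3 → ℂ) : ℂ :=
  (v ⬝ᵥ v) / (sqNorm v + wedgeNorm v : ℝ) *
    (extC l (conicPoint v) / conj (extC l (conicPoint v)))

lemma fiberCoord_smul {a : ℂ} (ha : a ≠ 0) (v : Fin 3 → ℂ) :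
    fiberCoord l (a • v) = fiberCoord l v := by
  have hna : (normSq a : ℂ) = a * conj a := (Complex.mul_conj a).symm
  have haa : a * conj a ≠ 0 := mul_ne_zero ha ((map_ne_zero _).2 ha)
  simp only [fiberCoord, conicPoint_smul, extC_smul, sqNorm_smul, wedgeNorm_smul,
    dotProduct_smul, smul_dotProduct, smul_eq_mul, map_mul, Complex.conj_ofReal,
    Complex.conj_conj]
  push_cast
  set q := v ⬝ᵥ v
  set X := extC l (conicPoint v)
  rw [hna, ← mul_add, div_mul_div_comm, div_mul_div_comm,
    show a * (a * q) * (a * conj a * conj a * X) = a * (a * conj a) ^ 2 * (q * X) by ring,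
    show a * conj a * (sqNorm v + wedgeNorm v) * (a * conj a * a * conj X)
      = a * (a * conj a) ^ 2 * ((sqNorm v + wedgeNorm v) * conj X) by ring,
    mul_div_mul_left _ _ (mul_ne_zero ha (pow_ne_zero 2 haa))]

lemma norm_fiberCoord_lt_one {v : Fin 3 → ℂ} (hs : 0 < wedgeNorm v) :
    ‖fiberCoord l v‖ < 1 := by
  have hX : ‖extC l (conicPoint v) / conj (extC l (conicPoint v))‖ ≤ 1 := by
    rw [norm_div, Complex.norm_conj]
    exact div_self_le_one _
  have hq : ‖(v ⬝ᵥ v) / (sqNorm v + wedgeNorm v : ℝ)‖ < 1 := by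
    have := norm_dotProduct_self_le v
    have hm : 0 < sqNorm v + wedgeNorm v := by linarith [sqNorm_nonneg v]
    rw [norm_div, Complex.norm_real, Real.norm_of_nonneg hm.le, div_lt_one hm]
    linarith
  rw [fiberCoord, norm_mul]
  calc _ ≤ ‖(v ⬝ᵥ v) / (sqNorm v + wedgeNorm v : ℝ)‖ * 1 := by gcongr
    _ < 1 := by rwa [mul_one]

lemma fiberCoord_fiberPoint {z : Fin 3 → ℂ} (hz : z ⬝ᵥ z = 0) (hz0 : z ≠ 0)
    (hl : extC l z = 1) {t : ℂ} (ht : ‖t‖ < 1) : fiberCoord l (fiberPoint z t) = t := by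
  have ht' := normSq_lt_one_of_norm_lt_one ht
  have hN := sqNorm_pos hz0
  have hc : (2 * (1 - normSq t) * sqNorm z : ℝ) ≠ 0 := by
    have := sub_pos.2 ht'
    positivity
  have hN' : (sqNorm z : ℂ) ≠ 0 := by exact_mod_cast hN.ne'
  rw [fiberCoord, conicPoint_fiberPoint hz ht'.le, sqNorm_fiberPoint hz,
    wedgeNorm_fiberPoint hz ht'.le, fiberPoint_dotProduct_self hz, extC_smul, hl, mul_one,
    Complex.conj_ofReal, div_self (Complex.ofReal_ne_zero.2 hc), mul_one]
  push_cast
  rw [← add_mul, show (1 : ℂ) + normSq t + (1 - normSq t) = 2 by ring]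
  field_simp

noncomputable def affineRep (z : Fin 3 → ℂ) : Fin 3 → ℂ := (extC l z)⁻¹ • z

lemma affineRep_smul {a : ℂ} (ha : a ≠ 0) (z : Fin 3 → ℂ) :
    affineRep l (a • z) = affineRep l z := by
  rw [affineRep, affineRep, extC_smul, smul_smul, mul_inv_rev, mul_assoc, inv_mul_cancel₀ ha,
    mul_one]

lemma extC_affineRep {z : Fin 3 → ℂ} (hz : extC l z ≠ 0) : extC l (affineRep l z) = 1 := by
  rw [affineRep, extC_smul, inv_mul_cancel₀ hz]

lemma affineRep_ne_zero {z : Fin 3 → ℂ} (hz : extC l z ≠ 0) : affineRep l z ≠ 0 := fun h => by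
  simpa [h, extC] using extC_affineRep l hz

lemma affineRep_dotProduct_self {z : Fin 3 → ℂ} (hz : z ⬝ᵥ z = 0) :
    affineRep l z ⬝ᵥ affineRep l z = 0 := by
  simp [affineRep, hz]

lemma extC_affineRep_ne_zero {z : Fin 3 → ℂ} (hz : extC l z ≠ 0)
    {l' : (Fin 3 → ℝ) →ₗ[ℝ] ℝ} (h' : extC l' z ≠ 0) : extC l' (affineRep l z) ≠ 0 := by
  rw [affineRep, extC_smul]
  exact mul_ne_zero (inv_ne_zero hz) h'

lemma fiberPoint_affineRep_conicPoint {v : Fin 3 → ℂ} (hv : v ≠ 0)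
    (hX : extC l (conicPoint v) ≠ 0) :
    fiberPoint (affineRep l (conicPoint v)) (fiberCoord l v)
      = ((conj (extC l (conicPoint v)))⁻¹ * (2 * wedgeNorm v : ℝ)) • v := by
  have h := fiberPoint_smul (conicPoint v) ((v ⬝ᵥ v) / (sqNorm v + wedgeNorm v : ℝ))
    (inv_ne_zero hX)
  rw [fiberPoint_conicPoint hv, smul_smul, map_inv₀] at h
  rw [affineRep, ← h, fiberCoord]
  congr 1
  field_simp

end LinearForm

section Projective

open Projectivization

lemma _root_.Projectivization.mk_smul_eq_mk {K V : Type*} [DivisionRing K] [AddCommGroup V]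
    [Module K V] {v : V} (hv : v ≠ 0) {a : K} (h : a • v ≠ 0) :
    mk K (a • v) h = mk K v hv :=
  (mk_eq_mk_iff' K _ _ h hv).2 ⟨a, rfl⟩

lemma mk_mem_conic_iff {v : Fin 3 → ℂ} (hv : v ≠ 0) : mk ℂ v hv ∈ conic ↔ v ⬝ᵥ v = 0 := by
  obtain ⟨a, ha⟩ := exists_smul_eq_mk_rep ℂ v hv
  simp only [conic, Set.mem_ofPred_eq, ← ha, Units.smul_def, Pi.smul_apply, smul_eq_mul,
    dotProduct, Fin.sum_univ_three]
  rw [show ∀ x y z : ℂ, (↑a * x) ^ 2 + (↑a * y) ^ 2 + (↑a * z) ^ 2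
      = (a : ℂ) ^ 2 * (x * x + y * y + z * z) from fun _ _ _ => by ring]
  simp [a.ne_zero]

lemma mk_mem_cLine_iff {v : Fin 3 → ℂ} (hv : v ≠ 0) (l : (Fin 3 → ℝ) →ₗ[ℝ] ℝ) :
    mk ℂ v hv ∈ cLine l ↔ extC l v = 0 := by
  obtain ⟨a, ha⟩ := exists_smul_eq_mk_rep ℂ v hv
  simp [cLine, ← ha, Units.smul_def, extC_smul, a.ne_zero]

lemma mk_mem_RP2_iff {v : Fin 3 → ℂ} (hv : v ≠ 0) : mk ℂ v hv ∈ RP2 ↔ wedgeNorm v = 0 := by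
  constructor
  · rintro ⟨w, hw, h⟩
    obtain ⟨a, rfl⟩ := (mk_eq_mk_iff' ℂ _ _ hv hw).1 h
    rw [wedgeNorm_smul, wedgeNorm_eq_zero_iff.2 fun i j => by simp [← Complex.ofReal_mul],
      mul_zero]
  · intro h
    obtain ⟨j, hj⟩ := Function.ne_iff.1 hv
    have hw : (fun i => ((v i * conj (v j)).re : ℂ)) = conj (v j) • v := by
      ext i
      rw [Pi.smul_apply, smul_eq_mul, mul_comm]
      exact Complex.ext rfl (by rw [Complex.ofReal_im, mul_comm, wedgeNorm_eq_zero_iff.1 h i j])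
    refine ⟨fun i => (v i * conj (v j)).re, ?_, ?_⟩
    · rw [hw]
      exact smul_ne_zero ((map_ne_zero _).2 hj) hv
    · simp_rw [hw, mk_smul_eq_mk hv]

variable {κ : Type*} (l : κ → (Fin 3 → ℝ) →ₗ[ℝ] ℝ)

abbrev outsideRealAndLines : Set CP2 := (RP2 ∪ ⋃ i, cLine (l i))ᶜ

abbrev conicOutsideLines : Set CP2 := conic \ (conic ∩ ⋃ i, cLine (l i))

lemma mk_mem_outsideRealAndLines_iff {v : Fin 3 → ℂ} (hv : v ≠ 0) :
    mk ℂ v hv ∈ outsideRealAndLines l ↔ 0 < wedgeNorm v ∧ ∀ i, extC (l i) v ≠ 0 := by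
  simp [mk_mem_RP2_iff, mk_mem_cLine_iff, (wedgeNorm_nonneg v).lt_iff_ne']

lemma mk_mem_conicOutsideLines_iff {v : Fin 3 → ℂ} (hv : v ≠ 0) :
    mk ℂ v hv ∈ conicOutsideLines l ↔ v ⬝ᵥ v = 0 ∧ ∀ i, extC (l i) v ≠ 0 := by
  simp [mk_mem_conic_iff, mk_mem_cLine_iff]

end Projective

section Trivialization

open Projectivization Metric Topology

lemma isQuotientMap_mk' : IsQuotientMap (mk' ℂ : {v : Fin 3 → ℂ // v ≠ 0} → CP2) :=
  isQuotientMap_quotient_mk'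

lemma isOpenQuotientMap_mk' :
    IsOpenQuotientMap (mk' ℂ : {v : Fin 3 → ℂ // v ≠ 0} → CP2) := by
  refine ⟨isQuotientMap_mk'.surjective, isQuotientMap_mk'.continuous, fun U hU => ?_⟩
  let smulUnit (a : ℂˣ) (v : {v : Fin 3 → ℂ // v ≠ 0}) : {v : Fin 3 → ℂ // v ≠ 0} :=
    ⟨(a : ℂ) • v.1, smul_ne_zero a.ne_zero v.2⟩
  have hsat : mk' ℂ ⁻¹' (mk' ℂ '' U) = ⋃ a : ℂˣ, smulUnit a ⁻¹' U := by
    ext v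
    simp only [Set.mem_preimage, Set.mem_image, Set.mem_iUnion]
    constructor
    · rintro ⟨u, hu, huv⟩
      obtain ⟨a, ha⟩ := (mk_eq_mk_iff ℂ _ _ u.2 v.2).1 huv
      exact ⟨a, by rwa [show smulUnit a v = u from Subtype.ext ha]⟩
    · rintro ⟨a, ha⟩
      exact ⟨_, ha, (mk_eq_mk_iff ℂ _ _ _ v.2).2 ⟨a, rfl⟩⟩
  rw [← isQuotientMap_mk'.isOpen_preimage, hsat]
  have hcont (a : ℂˣ) : Continuous (smulUnit a) :=
    (continuous_subtype_val.const_smul (a : ℂ)).subtype_mk _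
  exact isOpen_iUnion fun a => (hcont a).isOpen_preimage U hU

lemma continuousOn_fiberCoord (ℓ : (Fin 3 → ℝ) →ₗ[ℝ] ℝ) :
    ContinuousOn (fiberCoord ℓ) {v | v ≠ 0 ∧ extC ℓ (conicPoint v) ≠ 0} := by
  have hX := (continuous_extC ℓ).comp continuous_conicPoint
  refine ContinuousOn.mul (ContinuousOn.div (by fun_prop) (by fun_prop) fun v hv => ?_)
    (hX.continuousOn.div (Complex.continuous_conj.comp hX).continuousOn
      fun v hv => (map_ne_zero _).2 hv.2)
  have := sqNorm_pos hv.1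
  exact_mod_cast (by positivity [wedgeNorm_nonneg v] : sqNorm v + wedgeNorm v ≠ 0)

lemma continuousOn_affineRep (ℓ : (Fin 3 → ℝ) →ₗ[ℝ] ℝ) :
    ContinuousOn (affineRep ℓ) {z | extC ℓ z ≠ 0} :=
  ((continuous_extC ℓ).continuousOn.inv₀ fun _ h => h).smul continuousOn_id

variable {κ : Type*} (l : κ → (Fin 3 → ℝ) →ₗ[ℝ] ℝ) (i₀ : κ)

lemma conicPoint_mem {v : Fin 3 → ℂ} (hv : v ≠ 0) (hs : 0 < wedgeNorm v)
    (hl : ∀ i, extC (l i) v ≠ 0) :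
    mk ℂ (conicPoint v) (conicPoint_ne_zero hv hs) ∈ conicOutsideLines l :=
  (mk_mem_conicOutsideLines_iff l _).2
    ⟨conicPoint_dotProduct_self v, fun i => extC_conicPoint_ne_zero (l i) hv hs (hl i)⟩

lemma fiberPoint_affineRep_mem {z : Fin 3 → ℂ} (hz : z ⬝ᵥ z = 0)
    (hl : ∀ i, extC (l i) z ≠ 0) {t : ℂ} (ht : ‖t‖ < 1) :
    ∃ h, mk ℂ (fiberPoint (affineRep (l i₀) z) t) h ∈ outsideRealAndLines l := by
  have hs : 0 < wedgeNorm (fiberPoint (affineRep (l i₀) z) t) := by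
    have ht' := normSq_lt_one_of_norm_lt_one ht
    rw [wedgeNorm_fiberPoint (affineRep_dotProduct_self _ hz) ht'.le]
    exact mul_pos (by linarith) (sqNorm_pos (affineRep_ne_zero _ (hl i₀)))
  have hne : fiberPoint (affineRep (l i₀) z) t ≠ 0 := fun h => by
    simp [h, wedgeNorm, sqNorm] at hs
  exact ⟨hne, (mk_mem_outsideRealAndLines_iff l hne).2 ⟨hs, fun i =>
    extC_fiberPoint_ne_zero (l i) (extC_affineRep_ne_zero _ (hl i₀) (hl i)) ht⟩⟩

noncomputable def restrictMk' (S : Set CP2) : C(mk' ℂ ⁻¹' S, S) :=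
  ⟨S.restrictPreimage (mk' ℂ), isQuotientMap_mk'.continuous.restrictPreimage⟩

lemma isOpenQuotientMap_restrictMk' (S : Set CP2) : IsOpenQuotientMap (restrictMk' S) :=
  isOpenQuotientMap_mk'.restrictPreimage S

lemma isQuotientMap_restrictMk'_prodMap (S : Set CP2) (Y : Type*) [TopologicalSpace Y] :
    IsQuotientMap ((restrictMk' S).prodMap (ContinuousMap.id Y)) :=
  ((isOpenQuotientMap_restrictMk' S).prodMap .id).isQuotientMap

noncomputable def projectionRep :
    C(mk' ℂ ⁻¹' outsideRealAndLines l, conicOutsideLines l × ball (0 : ℂ) 1) where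
  toFun x :=
    have hx := (mk_mem_outsideRealAndLines_iff l x.1.2).1 x.2
    (⟨_, conicPoint_mem l x.1.2 hx.1 hx.2⟩,
      ⟨fiberCoord (l i₀) x.1.1, mem_ball_zero_iff.2 (norm_fiberCoord_lt_one _ hx.1)⟩)
  continuous_toFun := by
    have hval : Continuous fun x : mk' ℂ ⁻¹' outsideRealAndLines l => x.1.1 := by fun_prop
    refine .prodMk (.subtype_mk (isQuotientMap_mk'.continuous.comp
        ((continuous_conicPoint.comp hval).subtype_mk _)) _)
      (.subtype_mk ((continuousOn_fiberCoord (l i₀)).comp_continuous hval fun x => ?_) _)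
    have hx := (mk_mem_outsideRealAndLines_iff l x.1.2).1 x.2
    exact ⟨x.1.2, extC_conicPoint_ne_zero (l i₀) x.1.2 hx.1 (hx.2 i₀)⟩

noncomputable def sectionRep :
    C(mk' ℂ ⁻¹' conicOutsideLines l × ball (0 : ℂ) 1, outsideRealAndLines l) where
  toFun y :=
    have hy := (mk_mem_conicOutsideLines_iff l y.1.1.2).1 y.1.2
    have h := fiberPoint_affineRep_mem l i₀ hy.1 hy.2 (mem_ball_zero_iff.1 y.2.2)
    ⟨_, h.2⟩
  continuous_toFun := by
    have hrep : Continuous fun y : mk' ℂ ⁻¹' conicOutsideLines l × ball (0 : ℂ) 1 =>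
        affineRep (l i₀) y.1.1.1 :=
      (continuousOn_affineRep (l i₀)).comp_continuous (by fun_prop)
        fun y => ((mk_mem_conicOutsideLines_iff l y.1.1.2).1 y.1.2).2 i₀
    have hfib : Continuous fun y : mk' ℂ ⁻¹' conicOutsideLines l × ball (0 : ℂ) 1 =>
        fiberPoint (affineRep (l i₀) y.1.1.1) y.2.1 := by
      unfold fiberPoint
      fun_prop
    exact .subtype_mk (isQuotientMap_mk'.continuous.comp (hfib.subtype_mk _)) _

lemma projectionRep_factorsThrough :
    Function.FactorsThrough (projectionRep l i₀) (restrictMk' (outsideRealAndLines l)) := by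
  rintro ⟨⟨v, hv⟩, hvS⟩ ⟨⟨w, hw⟩, hwS⟩ h
  obtain ⟨a, rfl⟩ := (mk_eq_mk_iff ℂ _ _ hv hw).1 (congrArg Subtype.val h)
  refine Prod.ext (Subtype.ext ?_) (Subtype.ext ?_)
  · exact (mk_eq_mk_iff' ℂ _ _ _ _).2 ⟨_, (conicPoint_smul (a : ℂ) w).symm⟩
  · exact fiberCoord_smul _ a.ne_zero w

lemma sectionRep_factorsThrough :
    Function.FactorsThrough (sectionRep l i₀)
      ((restrictMk' (conicOutsideLines l)).prodMap (.id (ball (0 : ℂ) 1))) := by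
  rintro ⟨⟨⟨z, hz⟩, hzS⟩, t⟩ ⟨⟨⟨w, hw⟩, hwS⟩, t'⟩ h
  have hzw : mk ℂ z hz = mk ℂ w hw := congrArg (fun q => (q.1 : CP2)) h
  obtain rfl : t = t' := congrArg Prod.snd h
  obtain ⟨a, rfl⟩ := (mk_eq_mk_iff ℂ _ _ hz hw).1 hzw
  exact Subtype.ext ((mk_eq_mk_iff' ℂ _ _ _ _).2
    ⟨1, by dsimp only [id]; rw [one_smul, Units.smul_def, affineRep_smul _ a.ne_zero]⟩)

noncomputable def projection : C(outsideRealAndLines l, conicOutsideLines l × ball (0 : ℂ) 1) :=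
  (isOpenQuotientMap_restrictMk' _).isQuotientMap.lift (projectionRep l i₀)
    (projectionRep_factorsThrough l i₀)

noncomputable def sectionMap : C(conicOutsideLines l × ball (0 : ℂ) 1, outsideRealAndLines l) :=
  (isQuotientMap_restrictMk'_prodMap _ _).lift (sectionRep l i₀) (sectionRep_factorsThrough l i₀)

lemma projection_restrictMk' (x : mk' ℂ ⁻¹' outsideRealAndLines l) :
    projection l i₀ (restrictMk' _ x) = projectionRep l i₀ x := by
  rw [projection, ← ContinuousMap.comp_apply, IsQuotientMap.lift_comp]

lemma sectionMap_restrictMk' (y : mk' ℂ ⁻¹' conicOutsideLines l) (t : ball (0 : ℂ) 1) :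
    sectionMap l i₀ (restrictMk' _ y, t) = sectionRep l i₀ (y, t) := by
  rw [sectionMap, show (restrictMk' _ y, t) = (restrictMk' _).prodMap (.id _) (y, t) from rfl,
    ← ContinuousMap.comp_apply, IsQuotientMap.lift_comp]

lemma sectionMap_projection (p : outsideRealAndLines l) :
    sectionMap l i₀ (projection l i₀ p) = p := by
  obtain ⟨⟨⟨v, hv⟩, hvS⟩, rfl⟩ := (isOpenQuotientMap_restrictMk' _).surjective p
  obtain ⟨hs, hl⟩ := (mk_mem_outsideRealAndLines_iff l hv).1 hvS
  rw [projection_restrictMk']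
  refine (sectionMap_restrictMk' l i₀
    ⟨⟨conicPoint v, conicPoint_ne_zero hv hs⟩, conicPoint_mem l hv hs hl⟩ _).trans
    (Subtype.ext ((mk_eq_mk_iff' ℂ _ _ _ hv).2 ⟨_, (fiberPoint_affineRep_conicPoint (l i₀) hv
      (extC_conicPoint_ne_zero (l i₀) hv hs (hl i₀))).symm⟩))

lemma projection_sectionMap (q : conicOutsideLines l × ball (0 : ℂ) 1) :
    projection l i₀ (sectionMap l i₀ q) = q := by
  obtain ⟨b, t, ht⟩ := q
  obtain ⟨⟨⟨z, hz⟩, hzS⟩, rfl⟩ := (isOpenQuotientMap_restrictMk' _).surjective b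
  obtain ⟨hzz, hl⟩ := (mk_mem_conicOutsideLines_iff l hz).1 hzS
  obtain ⟨hne, hmem⟩ := fiberPoint_affineRep_mem l i₀ hzz hl (mem_ball_zero_iff.1 ht)
  have hz' := affineRep_dotProduct_self (l i₀) hzz
  rw [sectionMap_restrictMk']
  refine (projection_restrictMk' l i₀ ⟨⟨_, hne⟩, hmem⟩).trans
    (Prod.ext (Subtype.ext ?_) (Subtype.ext ?_))
  · have ht' := normSq_lt_one_of_norm_lt_one (mem_ball_zero_iff.1 ht)
    exact (mk_eq_mk_iff' ℂ _ _ _ hz).2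
      ⟨_, ((conicPoint_fiberPoint hz' ht'.le).trans (smul_smul _ _ z)).symm⟩
  · exact fiberCoord_fiberPoint (l i₀) hz' (affineRep_ne_zero _ (hl i₀))
      (extC_affineRep _ (hl i₀)) (mem_ball_zero_iff.1 ht)

noncomputable def trivialization :
    outsideRealAndLines l ≃ₜ conicOutsideLines l × ball (0 : ℂ) 1 where
  toFun := projection l i₀
  invFun := sectionMap l i₀
  left_inv := sectionMap_projection l i₀
  right_inv := projection_sectionMap l i₀
  continuous_toFun := (projection l i₀).continuous
  continuous_invFun := (sectionMap l i₀).continuous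

end Trivialization

end ConicFibration

theorem complement_lines_homeomorph_general (d : ℕ) (hd : 1 ≤ d)
    (l : Fin d → ((Fin 3 → ℝ) →ₗ[ℝ] ℝ)) :
    Nonempty (↥((RP2 ∪ ⋃ i, cLine (l i))ᶜ) ≃ₜ
      (↥(conic \ (conic ∩ ⋃ i, cLine (l i))) × (ℝ × ℝ))) :=
  ⟨(ConicFibration.trivialization l ⟨0, hd⟩).trans <| (Homeomorph.refl _).prodCongr <|
    Homeomorph.unitBall.symm.trans Complex.equivRealProdCLM.toHomeomorph⟩

/-- For `d ≥ 1` nonzero, pairwise non-proportional real linear forms `ℓ₁, …, ℓ_d`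
on `ℝ³`, with corresponding complex lines `ℂLᵢ` and `ℂA₀ = ℂL₁ ∪ … ∪ ℂL_d`,
`Ṽ = C ∩ ℂA₀`, the subspace `ℂP² ∖ (ℝP² ∪ ℂA₀)` is homeomorphic to
`(C ∖ Ṽ) × ℝ²`. -/
theorem complement_lines_homeomorph (d : ℕ) (hd : 1 ≤ d)
    (l : Fin d → ((Fin 3 → ℝ) →ₗ[ℝ] ℝ))
    (hl : ∀ i, l i ≠ 0)
    (hprop : ∀ i j, i ≠ j → ∀ c : ℝ, l j ≠ c • l i) :
    Nonempty (↥((RP2 ∪ ⋃ i, cLine (l i))ᶜ) ≃ₜ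
      (↥(conic \ (conic ∩ ⋃ i, cLine (l i))) × (ℝ × ℝ))) :=
  complement_lines_homeomorph_general d hd l
end
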